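/- Let N ≥ 1 be a natural number, let a_{-N}, …, a_{-1}, a₀ be complex numbers, and let f : (0,∞) → ℂ be continuous. Suppose there are constants C > 0 and δ > 0 such that |f(t) − ∑_{k=1}^{N} a_{-k} t^{-k} − a₀| ≤ C·t for all 0 < t ≤ 1, and |f(t)| ≤ C·e^{-δ t} for all t ≥ 1. Then there exists a function h, analytic on {s ∈ ℂ : Re s > −1} \ {2, …, N}, such that h(s) = s(1−s) · Γ(s)⁻¹ · ∫₀^∞ f(t) t^{s-1} dt for all s with Re s > N, and h satisfies h(0) = 0 and h′(0) = a₀. -/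

import Mathlib

/-!
Subtract from `f` its short-time expansion `P(t) = ∑ a_k t^{-k} + a₀`, cut off to `(0, 1]`.
The remainder is `O(t)` at `0` and decays exponentially, so its Mellin transform `M` is holomorphic
on `Re s > -1`, while the cut-off expansion contributes `∑ a_k / (s - k) + a₀ / s` for `Re s > N`.
Using `Γ(s)⁻¹ = s Γ(s + 1)⁻¹`, the function `s (1 - s) Γ(s)⁻¹ (M(s) + ∑ a_k / (s - k) + a₀ / s)`
is `s · g(s)` with `g` holomorphic away from `{2, …, N}` (the factor `1 - s` cancels the pole at
`1`) and `g(0) = a₀`, whence the value `0` and the derivative `a₀` at `s = 0`.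
-/

open MeasureTheory Set Filter Asymptotics Topology

section HasMellin

variable {E : Type*} [NormedAddCommGroup E] [NormedSpace ℂ E] {f g : ℝ → E} {s : ℂ} {m n : E}

theorem HasMellin.add (hf : HasMellin f s m) (hg : HasMellin g s n) :
    HasMellin (fun t => f t + g t) s (m + n) :=
  hf.2 ▸ hg.2 ▸ hasMellin_add hf.1 hg.1

theorem HasMellin.const_smul (hf : HasMellin f s m) (c : ℂ) :
    HasMellin (fun t => c • f t) s (c • m) :=
  hf.2 ▸ hasMellin_const_smul hf.1 c

theorem hasMellin_sum {ι : Type*} (u : Finset ι) {f : ι → ℝ → E} {m : ι → E}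
    (hf : ∀ i ∈ u, HasMellin (f i) s (m i)) :
    HasMellin (fun t => ∑ i ∈ u, f i t) s (∑ i ∈ u, m i) := by
  have hconv : MellinConvergent (fun t => ∑ i ∈ u, f i t) s := by
    simpa only [MellinConvergent, IntegrableOn, Finset.smul_sum] using
      integrable_finsetSum u fun i hi => (hf i hi).1
  refine ⟨hconv, ?_⟩
  simp only [mellin, Finset.smul_sum]
  rw [integral_finsetSum u fun i hi => (hf i hi).1]
  exact Finset.sum_congr rfl fun i hi => (hf i hi).2

end HasMellin

noncomputable def laurentHead (N : ℕ) (a : ℕ → ℂ) (t : ℝ) : ℂ :=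
  ∑ k ∈ Finset.Icc 1 N, a k * (t : ℂ) ^ (-(k : ℤ)) + a 0

section LaurentHead

variable (N : ℕ) (a : ℕ → ℂ)

theorem continuousOn_laurentHead : ContinuousOn (laurentHead N a) (Ioi 0) := by
  refine (continuousOn_finsetSum _ fun k _ => continuousOn_const.mul ?_).add continuousOn_const
  exact (Complex.continuous_ofReal.continuousOn).zpow₀ _
    fun t ht => Or.inl (Complex.ofReal_ne_zero.mpr (ne_of_gt ht))

theorem indicator_Ioc_laurentHead :
    (Ioc 0 1).indicator (laurentHead N a) = fun t =>
      ∑ k ∈ Finset.Icc 1 N, a k • (Ioc 0 1).indicator (fun t : ℝ => (t : ℂ) ^ (-(k : ℂ))) t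
        + a 0 • (Ioc 0 1).indicator (fun _ => (1 : ℂ)) t := by
  funext t
  by_cases ht : t ∈ Ioc 0 1
  · simp [indicator_of_mem ht, laurentHead, Complex.cpow_neg]
  · simp [indicator_of_notMem ht]

theorem hasMellin_indicator_Ioc_laurentHead {s : ℂ} (hs : (N : ℝ) < s.re) :
    HasMellin ((Ioc 0 1).indicator (laurentHead N a)) s
      (∑ k ∈ Finset.Icc 1 N, a k / (s - k) + a 0 / s) := by
  have hpoles : HasMellin (fun t => ∑ k ∈ Finset.Icc 1 N,
      a k • (Ioc 0 1).indicator (fun t : ℝ => (t : ℂ) ^ (-(k : ℂ))) t) s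
      (∑ k ∈ Finset.Icc 1 N, a k / (s - k)) := by
    refine hasMellin_sum _ fun k hk => ?_
    have hkN : (k : ℝ) ≤ N := by exact_mod_cast (Finset.mem_Icc.mp hk).2
    have := (hasMellin_cpow_Ioc (-(k : ℂ)) (s := s) (by simp; linarith)).const_smul (a k)
    simpa only [smul_eq_mul, one_div, div_eq_mul_inv, one_mul, sub_eq_add_neg] using this
  have hconst :=
    (hasMellin_one_Ioc (s := s) (by linarith [N.cast_nonneg (α := ℝ)])).const_smul (a 0)
  rw [indicator_Ioc_laurentHead]
  simpa only [smul_eq_mul, one_div, div_eq_mul_inv, one_mul] using hpoles.add hconst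

end LaurentHead

noncomputable def laurentRemainder (N : ℕ) (a : ℕ → ℂ) (f : ℝ → ℂ) (t : ℝ) : ℂ :=
  f t - (Ioc 0 1).indicator (laurentHead N a) t

section LaurentRemainder

variable {N : ℕ} {a : ℕ → ℂ} {f : ℝ → ℂ} {C δ : ℝ}

theorem locallyIntegrableOn_laurentRemainder (hf : ContinuousOn f (Ioi 0)) :
    LocallyIntegrableOn (laurentRemainder N a f) (Ioi 0) := by
  refine (hf.locallyIntegrableOn measurableSet_Ioi).sub fun t ht => ?_
  obtain ⟨U, hU, hint⟩ :=
    (continuousOn_laurentHead N a).locallyIntegrableOn (μ := volume) measurableSet_Ioi t ht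
  exact ⟨U, hU, hint.indicator measurableSet_Ioc⟩

theorem laurentRemainder_isBigO_nhdsGT
    (h0 : ∀ t : ℝ, 0 < t → t ≤ 1 → ‖f t - laurentHead N a t‖ ≤ C * t) :
    laurentRemainder N a f =O[𝓝[>] 0] (· ^ (-(-1 : ℝ))) := by
  refine IsBigO.of_bound C ?_
  filter_upwards [Ioc_mem_nhdsGT (zero_lt_one' ℝ)] with t ht
  rw [laurentRemainder, indicator_of_mem ht, neg_neg, Real.rpow_one,
    Real.norm_of_nonneg ht.1.le]
  exact h0 t ht.1 ht.2

theorem laurentRemainder_isBigO_atTop (hinf : ∀ t : ℝ, 1 ≤ t → ‖f t‖ ≤ C * Real.exp (-δ * t)) :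
    laurentRemainder N a f =O[atTop] fun t => Real.exp (-δ * t) := by
  refine IsBigO.of_bound C ?_
  filter_upwards [eventually_gt_atTop 1] with t ht
  rw [laurentRemainder, indicator_of_notMem fun h => ht.not_ge h.2, sub_zero,
    Real.norm_of_nonneg (Real.exp_pos _).le]
  exact hinf t ht.le

theorem mellin_eq_mellin_laurentRemainder_add {s : ℂ} (hf : ContinuousOn f (Ioi 0)) (hδ : 0 < δ)
    (h0 : ∀ t : ℝ, 0 < t → t ≤ 1 → ‖f t - laurentHead N a t‖ ≤ C * t)
    (hinf : ∀ t : ℝ, 1 ≤ t → ‖f t‖ ≤ C * Real.exp (-δ * t)) (hs : (N : ℝ) < s.re) :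
    mellin f s = mellin (laurentRemainder N a f) s +
      (∑ k ∈ Finset.Icc 1 N, a k / (s - k) + a 0 / s) := by
  have hconv : MellinConvergent (laurentRemainder N a f) s :=
    mellinConvergent_of_isBigO_rpow_exp hδ (locallyIntegrableOn_laurentRemainder hf)
      (laurentRemainder_isBigO_atTop hinf) (laurentRemainder_isBigO_nhdsGT h0)
      (by linarith [N.cast_nonneg (α := ℝ)])
  have := HasMellin.add ⟨hconv, rfl⟩ (hasMellin_indicator_Ioc_laurentHead N a hs)
  simpa only [laurentRemainder, sub_add_cancel] using this.2

end LaurentRemainder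

/-- `s (1 - s) Γ(s)⁻¹ (M(s) + ∑ a_k / (s - k) + a₀ / s)` divided by `s`, rewritten with
`Γ(s)⁻¹ = s Γ(s + 1)⁻¹` and `(1 - s) / (s - k) = (1 - k) / (s - k) - 1` so that it is visibly
holomorphic wherever `M` is, except at `s = 2, …, N`. -/
noncomputable def reducedHessianZeta (N : ℕ) (a : ℕ → ℂ) (M : ℂ → ℂ) (s : ℂ) : ℂ :=
  (Complex.Gamma (s + 1))⁻¹ *
    ((1 - s) * (s * M s + a 0) + s * ∑ k ∈ Finset.Icc 1 N, a k * ((1 - k) / (s - k) - 1))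

section ReducedHessianZeta

variable (N : ℕ) (a : ℕ → ℂ) {M : ℂ → ℂ}

theorem reducedHessianZeta_zero : reducedHessianZeta N a M 0 = a 0 := by
  simp [reducedHessianZeta]

theorem analyticOnNhd_reducedHessianZeta {U : Set ℂ} (hU : IsOpen U)
    (hM : DifferentiableOn ℂ M U) :
    AnalyticOnNhd ℂ (reducedHessianZeta N a M)
      (U \ {s : ℂ | ∃ k : ℕ, 2 ≤ k ∧ k ≤ N ∧ s = k}) := by
  have hpoles : {s : ℂ | ∃ k : ℕ, 2 ≤ k ∧ k ≤ N ∧ s = k}.Finite :=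
    ((Finset.Icc 2 N).finite_toSet.image (fun k : ℕ => (k : ℂ))).subset
      fun s ⟨k, h2, hN, hs⟩ => ⟨k, Finset.mem_Icc.mpr ⟨h2, hN⟩, hs.symm⟩
  refine DifferentiableOn.analyticOnNhd (fun s hs => ?_) (hU.sdiff hpoles.isClosed)
  have hterm : ∀ k ∈ Finset.Icc 1 N,
      DifferentiableAt ℂ (fun s : ℂ => a k * ((1 - k) / (s - k) - 1)) s := by
    intro k hk
    obtain ⟨hk1, hkN⟩ := Finset.mem_Icc.mp hk
    rcases eq_or_lt_of_le hk1 with rfl | hk2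
    · simp -- the numerator `1 - k` vanishes at `k = 1`
    · have hsk : s - k ≠ 0 := sub_ne_zero.mpr fun h => hs.2 ⟨k, hk2, hkN, h⟩
      fun_prop (disch := exact hsk)
  have hMs := hM.differentiableAt (hU.mem_nhds hs.1)
  have hΓ : Differentiable ℂ fun s : ℂ => (Complex.Gamma (s + 1))⁻¹ :=
    Complex.differentiable_one_div_Gamma.comp (differentiable_id.add_const 1)
  have hsum := DifferentiableAt.fun_sum hterm
  unfold reducedHessianZeta
  exact ((hΓ s).mul (by fun_prop)).differentiableWithinAt

theorem mul_reducedHessianZeta_eq {s : ℂ} (hs : (N : ℝ) < s.re) :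
    s * reducedHessianZeta N a M s = s * (1 - s) * (Complex.Gamma s)⁻¹ *
      (M s + (∑ k ∈ Finset.Icc 1 N, a k / (s - k) + a 0 / s)) := by
  have hs0 : s ≠ 0 := by
    rintro rfl
    simp only [Complex.zero_re] at hs
    exact hs.not_ge N.cast_nonneg
  have hsum : ∑ k ∈ Finset.Icc 1 N, a k * ((1 - k) / (s - k) - 1) =
      (1 - s) * ∑ k ∈ Finset.Icc 1 N, a k / (s - k) := by
    rw [Finset.mul_sum]
    refine Finset.sum_congr rfl fun k hk => ?_
    have hkN : (k : ℝ) ≤ N := by exact_mod_cast (Finset.mem_Icc.mp hk).2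
    have hsk : s - k ≠ 0 := fun h => by
      simpa [sub_eq_zero.mp h] using hkN.trans_lt hs
    field_simp
    ring
  rw [reducedHessianZeta, hsum, Complex.Gamma_add_one s hs0, mul_inv]
  field_simp
  ring

end ReducedHessianZeta

theorem hessian_zeta_value_and_derivative_at_zero_general
    (N : ℕ) (a : ℕ → ℂ) (f : ℝ → ℂ)
    (hf : ContinuousOn f (Ioi 0)) (C δ : ℝ) (hδ : 0 < δ)
    (h0 : ∀ t : ℝ, 0 < t → t ≤ 1 →
      ‖f t - (∑ k ∈ Finset.Icc 1 N, a k * (t : ℂ) ^ (-(k : ℤ))) - a 0‖ ≤ C * t)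
    (hinf : ∀ t : ℝ, 1 ≤ t → ‖f t‖ ≤ C * Real.exp (-δ * t)) :
    ∃ h : ℂ → ℂ,
      AnalyticOnNhd ℂ h
        ({s : ℂ | -1 < s.re} \ {s : ℂ | ∃ k : ℕ, 2 ≤ k ∧ k ≤ N ∧ s = (k : ℂ)}) ∧
      (∀ s : ℂ, (N : ℝ) < s.re →
        h s = s * (1 - s) * (Complex.Gamma s)⁻¹ *
          ∫ t in Ioi (0 : ℝ), f t * (t : ℂ) ^ (s - 1)) ∧
      h 0 = 0 ∧ deriv h 0 = a 0 := by
  have h0' (t : ℝ) (ht : 0 < t) (ht1 : t ≤ 1) : ‖f t - laurentHead N a t‖ ≤ C * t := by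
    simpa only [laurentHead, sub_add_eq_sub_sub] using h0 t ht ht1
  set M := mellin (laurentRemainder N a f)
  have hM : DifferentiableOn ℂ M {s : ℂ | -1 < s.re} := fun s hs =>
    (mellin_differentiableAt_of_isBigO_rpow_exp hδ (locallyIntegrableOn_laurentRemainder hf)
      (laurentRemainder_isBigO_atTop hinf) (laurentRemainder_isBigO_nhdsGT h0')
      hs).differentiableWithinAt
  have hg := analyticOnNhd_reducedHessianZeta N a
    (isOpen_lt continuous_const Complex.continuous_re) hM
  refine ⟨fun s => s * reducedHessianZeta N a M s, analyticOnNhd_id.mul hg, fun s hs => ?_,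
    by simp, ?_⟩
  · dsimp only
    rw [mul_reducedHessianZeta_eq N a hs,
      ← mellin_eq_mellin_laurentRemainder_add hf hδ h0' hinf hs]
    simp_rw [mellin, smul_eq_mul, mul_comm _ (f _)]
  · have hd : DifferentiableAt ℂ (reducedHessianZeta N a M) 0 :=
      (hg 0 ⟨by simp, by rintro ⟨k, hk, -, h⟩; norm_cast at h; omega⟩).differentiableAt
    rw [((hasDerivAt_id' (0 : ℂ)).fun_mul hd.hasDerivAt).deriv, reducedHessianZeta_zero]
    ring

/-- If a continuous function `f` on `(0,∞)` has a short-time expansion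
`f(t) = ∑_{k=1}^N a_{-k} t^{-k} + a₀ + O(t)` and decays exponentially at infinity, then
`s(1−s)Γ(s)⁻¹ ∫₀^∞ f(t) t^{s-1} dt` extends to a function `h` analytic on
`{Re s > −1} \ {2, …, N}` with `h(0) = 0` and `h′(0) = a₀`. -/
theorem hessian_zeta_value_and_derivative_at_zero
    (N : ℕ) (hN : 1 ≤ N) (a : ℕ → ℂ) (f : ℝ → ℂ)
    (hf : ContinuousOn f (Ioi 0)) (C δ : ℝ) (hC : 0 < C) (hδ : 0 < δ)
    (h0 : ∀ t : ℝ, 0 < t → t ≤ 1 →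
      ‖f t - (∑ k ∈ Finset.Icc 1 N, a k * (t : ℂ) ^ (-(k : ℤ))) - a 0‖ ≤ C * t)
    (hinf : ∀ t : ℝ, 1 ≤ t → ‖f t‖ ≤ C * Real.exp (-δ * t)) :
    ∃ h : ℂ → ℂ,
      AnalyticOnNhd ℂ h
        ({s : ℂ | -1 < s.re} \ {s : ℂ | ∃ k : ℕ, 2 ≤ k ∧ k ≤ N ∧ s = (k : ℂ)}) ∧
      (∀ s : ℂ, (N : ℝ) < s.re →
        h s = s * (1 - s) * (Complex.Gamma s)⁻¹ *
          ∫ t in Ioi (0 : ℝ), f t * (t : ℂ) ^ (s - 1)) ∧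
      h 0 = 0 ∧ deriv h 0 = a 0 :=
  hessian_zeta_value_and_derivative_at_zero_general N a f hf C δ hδ h0 hinf
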